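/- For a standard Brownian motion W and a > 0, the first hitting time T_a = inf{t : W(t) = a} satisfies P(T_a ≤ τ) = 2 P(W(τ) ≥ a) for every τ > 0. -/

import Mathlib

open MeasureTheory
open scoped ENNReal NNReal

/-- A standard one-dimensional Brownian motion (started at `0`): measurable marginals,
a.s. zero start, a.s. continuous paths, Gaussian increments `W_t - W_s ~ N(0, t-s)`,
and independent increments over any increasing sequence of times. -/
def IsBrownianMotion {Ω : Type*} [MeasurableSpace Ω] (P : Measure Ω)
    (W : ℝ → Ω → ℝ) : Prop :=
  (∀ t : ℝ, Measurable (W t)) ∧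
  (∀ᵐ ω ∂P, W 0 ω = 0) ∧
  (∀ᵐ ω ∂P, Continuous fun t => W t ω) ∧
  (∀ s t : ℝ, 0 ≤ s → s ≤ t →
    Measure.map (fun ω => W t ω - W s ω) P =
      ProbabilityTheory.gaussianReal 0 ((t - s).toNNReal)) ∧
  (∀ (n : ℕ) (t : ℕ → ℝ), Monotone t → 0 ≤ t 0 →
    ProbabilityTheory.iIndepFun
      (fun (i : Fin n) ω => W (t (i + 1)) ω - W (t i) ω) P)

/-!
Sample the path on the grid `kτ/N`. The increments there are i.i.d. centred Gaussians, and
flipping the signs of all increments after the first passage of the walk above a level preserves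
their joint law. This gives the discrete reflection inequalities
`P(max_k S_k ≥ b) ≤ 2 P(S_N ≥ b)` and
`P(S_N ≥ a) + P(S_N ≥ a + 2ε) ≤ P(max_k S_k ≥ a) + P(some step exceeds ε)`.
As `N → ∞`, continuity of the paths makes the grid maximum eventually exceed every `b < a` once
the path hits `a` before `τ`, and makes all steps eventually smaller than `ε`. Letting `b ↑ a`,
`ε ↓ 0` and using that `N(0, τ)` has no atoms turns the two bounds into the equality.
-/

open ProbabilityTheory Set Filter Topology

namespace ReflectionPrinciple

section RandomWalk

variable {N : ℕ}

def partialSum (k : ℕ) (x : Fin N → ℝ) : ℝ := ∑ i : Fin N, if (i : ℕ) < k then x i else 0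

def reflectFrom (k : ℕ) (x : Fin N → ℝ) : Fin N → ℝ := fun i => if (i : ℕ) < k then x i else -x i

def firstPassage (a : ℝ) (k : ℕ) : Set (Fin N → ℝ) :=
  {x | (∀ j < k, partialSum j x < a) ∧ a ≤ partialSum k x}

def hitsLevel (a : ℝ) : Set (Fin N → ℝ) := {x | ∃ k ≤ N, a ≤ partialSum k x}

def hasStepGT (ε : ℝ) : Set (Fin N → ℝ) := {x | ∃ i, ε < |x i|}

@[fun_prop]
lemma measurable_partialSum (k : ℕ) : Measurable (partialSum (N := N) k) :=
  Finset.measurable_sum _ fun i _ => by split_ifs <;> fun_prop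

@[fun_prop]
lemma measurable_reflectFrom (k : ℕ) : Measurable (reflectFrom (N := N) k) :=
  measurable_pi_lambda _ fun i => by unfold reflectFrom; split_ifs <;> fun_prop

lemma measurableSet_firstPassage (a : ℝ) (k : ℕ) : MeasurableSet (firstPassage (N := N) a k) :=
  measurableSet_setOfPred.2 <| (Measurable.forall fun j => Measurable.forall fun _ =>
    measurableSet_setOfPred.1 (measurableSet_lt (by fun_prop) measurable_const)).and
    (measurableSet_setOfPred.1 (measurableSet_le measurable_const (by fun_prop)))

lemma measurableSet_hitsLevel (a : ℝ) : MeasurableSet (hitsLevel (N := N) a) :=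
  measurableSet_setOfPred.2 <| Measurable.exists fun k => measurable_const.and
    (measurableSet_setOfPred.1 (measurableSet_le measurable_const (by fun_prop)))

lemma measurableSet_hasStepGT (ε : ℝ) : MeasurableSet (hasStepGT (N := N) ε) :=
  measurableSet_setOfPred.2 <| Measurable.exists fun i =>
    measurableSet_setOfPred.1 (measurableSet_lt measurable_const (by fun_prop))

lemma partialSum_zero (x : Fin N → ℝ) : partialSum 0 x = 0 := by simp [partialSum]

lemma partialSum_succ {j : ℕ} (hj : j < N) (x : Fin N → ℝ) :
    partialSum (j + 1) x = partialSum j x + x ⟨j, hj⟩ := by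
  have hx : x ⟨j, hj⟩ = ∑ i, if i = ⟨j, hj⟩ then x i else 0 := by simp
  rw [hx, partialSum, partialSum, ← Finset.sum_add_distrib]
  refine Finset.sum_congr rfl fun i _ => ?_
  simp only [Fin.ext_iff]
  split_ifs <;> first | omega | simp

lemma partialSum_reflectFrom_of_le {j k : ℕ} (hjk : j ≤ k) (x : Fin N → ℝ) :
    partialSum j (reflectFrom k x) = partialSum j x :=
  Finset.sum_congr rfl fun i _ => by
    unfold reflectFrom
    split_ifs <;> first | rfl | omega

lemma partialSum_self_reflectFrom (k : ℕ) (x : Fin N → ℝ) :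
    partialSum N (reflectFrom k x) = 2 * partialSum k x - partialSum N x := by
  simp only [partialSum, reflectFrom, Finset.mul_sum, ← Finset.sum_sub_distrib, Fin.is_lt,
    if_true]
  refine Finset.sum_congr rfl fun i _ => ?_
  split_ifs <;> ring

lemma reflectFrom_mem_firstPassage {a : ℝ} {k : ℕ} {x : Fin N → ℝ}
    (hx : x ∈ firstPassage a k) : reflectFrom k x ∈ firstPassage a k := by
  refine ⟨fun j hj => ?_, ?_⟩
  · rw [partialSum_reflectFrom_of_le hj.le]
    exact hx.1 j hj
  · rw [partialSum_reflectFrom_of_le le_rfl]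
    exact hx.2

lemma hitsLevel_eq_biUnion (a : ℝ) :
    hitsLevel (N := N) a = ⋃ k ∈ Finset.range (N + 1), firstPassage a k := by
  classical
  ext x
  simp only [hitsLevel, mem_ofPred_eq, mem_iUnion, Finset.mem_range, Nat.lt_succ_iff,
    exists_prop]
  constructor
  · intro h
    refine ⟨Nat.find h, (Nat.find_spec h).1, fun j hj => ?_, (Nat.find_spec h).2⟩
    exact lt_of_not_ge fun hle => Nat.find_min h hj ⟨(hj.trans_le (Nat.find_spec h).1).le, hle⟩
  · rintro ⟨k, hk, hx⟩
    exact ⟨k, hk, hx.2⟩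

lemma pairwiseDisjoint_firstPassage (a : ℝ) (s : Set ℕ) :
    s.PairwiseDisjoint (firstPassage (N := N) a) := by
  intro j _ k _ hjk
  refine Set.disjoint_left.2 fun x hxj hxk => ?_
  rcases hjk.lt_or_gt with h | h
  · exact (hxk.1 j h).not_ge hxj.2
  · exact (hxj.1 k h).not_ge hxk.2

variable {μ : Measure (Fin N → ℝ)}

lemma measure_hitsLevel_inter (a : ℝ) {T : Set (Fin N → ℝ)} (hT : MeasurableSet T) :
    μ (hitsLevel a ∩ T) = ∑ k ∈ Finset.range (N + 1), μ (firstPassage a k ∩ T) := by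
  rw [hitsLevel_eq_biUnion, iUnion₂_inter]
  exact measure_biUnion_finset
    (fun j hj k hk hjk => ((pairwiseDisjoint_firstPassage a _ hj hk hjk).mono
      inter_subset_left inter_subset_left))
    fun k _ => (measurableSet_firstPassage a k).inter hT

lemma measure_hitsLevel_eq (a : ℝ) :
    μ (hitsLevel a) = μ (hitsLevel a ∩ {x | partialSum N x < a}) + μ {x | a ≤ partialSum N x} := by
  rw [← measure_inter_add_sdiff (hitsLevel a)
    (measurableSet_lt (measurable_partialSum N) measurable_const)]
  congr 2
  ext x
  simp only [Set.mem_sdiff, mem_ofPred_eq, not_lt, and_iff_right_iff_imp]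
  exact fun hx => ⟨N, le_rfl, hx⟩

lemma measure_hitsLevel_inter_le_of_reflectFrom (hμ : ∀ k, μ.map (reflectFrom k) = μ)
    {a : ℝ} {T T' : Set (Fin N → ℝ)} (hT : MeasurableSet T) (hT' : MeasurableSet T')
    (hmaps : ∀ k ≤ N, ∀ x ∈ firstPassage a k ∩ T, reflectFrom k x ∈ T') :
    μ (hitsLevel a ∩ T) ≤ μ (hitsLevel a ∩ T') := by
  rw [measure_hitsLevel_inter a hT, measure_hitsLevel_inter a hT']
  refine Finset.sum_le_sum fun k hk => ?_
  calc μ (firstPassage a k ∩ T)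
      ≤ μ (reflectFrom k ⁻¹' (firstPassage a k ∩ T')) :=
        measure_mono fun x hx => ⟨reflectFrom_mem_firstPassage hx.1,
          hmaps k (Nat.lt_succ_iff.1 (Finset.mem_range.1 hk)) x hx⟩
    _ = μ (firstPassage a k ∩ T') := by
        rw [← Measure.map_apply (by fun_prop) ((measurableSet_firstPassage a k).inter hT'), hμ]

theorem measure_hitsLevel_le_two_mul (hμ : ∀ k, μ.map (reflectFrom k) = μ) (a : ℝ) :
    μ (hitsLevel a) ≤ 2 * μ {x | a ≤ partialSum N x} := by
  have hreflect := measure_hitsLevel_inter_le_of_reflectFrom hμ (a := a)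
    (T := {x | partialSum N x < a}) (T' := {x | a < partialSum N x})
    (measurableSet_lt (measurable_partialSum N) measurable_const)
    (measurableSet_lt measurable_const (measurable_partialSum N))
    fun k _ x ⟨hx, hxT⟩ => by
      simp only [mem_ofPred_eq, partialSum_self_reflectFrom] at hxT ⊢
      linarith [hx.2]
  rw [measure_hitsLevel_eq, two_mul]
  exact add_le_add_left (hreflect.trans (measure_mono fun x hx => hx.2.out.le)) _

theorem le_measure_hitsLevel_add_measure_hasStepGT (hμ : ∀ k, μ.map (reflectFrom k) = μ)
    {a ε : ℝ} (ha : 0 < a) (hε : 0 ≤ ε) :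
    μ {x | a ≤ partialSum N x} + μ {x | a + 2 * ε ≤ partialSum N x} ≤
      μ (hitsLevel a) + μ (hasStepGT ε) := by
  set D := {x : Fin N → ℝ | a + 2 * ε ≤ partialSum N x} \ hasStepGT ε
  have hD : D ⊆ hitsLevel a := fun x hx => ⟨N, le_rfl, by linarith [hx.1.out]⟩
  have hreflect := measure_hitsLevel_inter_le_of_reflectFrom hμ (a := a) (T := D)
    (T' := {x | partialSum N x < a})
    ((measurableSet_le measurable_const (measurable_partialSum N)).diff
      (measurableSet_hasStepGT ε))
    (measurableSet_lt (measurable_partialSum N) measurable_const)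
    fun k _ x ⟨hx, hxD, hsmall⟩ => by
      -- with all steps at most `ε`, the walk overshoots `a` at its first passage by less than `ε`
      obtain ⟨j, rfl⟩ : ∃ j, k = j + 1 := Nat.exists_eq_add_one.2 <| Nat.pos_of_ne_zero
        fun hk => by subst hk; linarith [hx.2, partialSum_zero x]
      have hj : j < N := by omega
      have hstep : x ⟨j, hj⟩ ≤ ε := (le_abs_self _).trans (not_lt.1 fun h => hsmall ⟨_, h⟩)
      simp only [mem_ofPred_eq, partialSum_self_reflectFrom, partialSum_succ hj] at hxD ⊢
      linarith [hx.1 j j.lt_succ_self]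
  have hsplit : μ {x | a + 2 * ε ≤ partialSum N x} ≤ μ D + μ (hasStepGT ε) :=
    (measure_mono fun x hx => by by_cases h : x ∈ hasStepGT ε <;> simp_all [D]).trans
      (measure_union_le _ _)
  calc μ {x | a ≤ partialSum N x} + μ {x | a + 2 * ε ≤ partialSum N x}
      ≤ μ {x | a ≤ partialSum N x} + (μ (hitsLevel a ∩ D) + μ (hasStepGT ε)) := by
        rw [inter_eq_right.2 hD]
        gcongr
    _ ≤ μ {x | a ≤ partialSum N x} + (μ (hitsLevel a ∩ {x | partialSum N x < a}) +
          μ (hasStepGT ε)) := by gcongr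
    _ = μ (hitsLevel a) + μ (hasStepGT ε) := by rw [measure_hitsLevel_eq a]; ring

lemma map_reflectFrom_pi {ρ : Measure ℝ} [IsFiniteMeasure ρ] [ρ.IsNegInvariant] (k : ℕ) :
    (Measure.pi fun _ : Fin N => ρ).map (reflectFrom k) = Measure.pi fun _ => ρ := by
  refine (Measure.pi_map_pi (f := fun (i : Fin N) (y : ℝ) => if (i : ℕ) < k then y else -y)
    fun i => by split_ifs <;> fun_prop).trans ?_
  congr with i : 1
  split_ifs
  · exact Measure.map_id
  · exact Measure.map_neg_eq_self ρ

end RandomWalk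

instance isNegInvariant_gaussianReal (v : ℝ≥0) : (gaussianReal 0 v).IsNegInvariant :=
  ⟨by simpa [Measure.neg_def] using gaussianReal_map_neg (μ := 0) (v := v)⟩

section Grid

/-- The grid `i * τ / N`, frozen at `τ` for `i ≥ N` so that it is a monotone sequence `ℕ → ℝ`,
as in the independence clause of `IsBrownianMotion`. -/
noncomputable def gridTime (τ : ℝ) (N i : ℕ) : ℝ := (min i N : ℕ) * (τ / N)

noncomputable def gridIncrements (f : ℝ → ℝ) (τ : ℝ) (N : ℕ) : Fin N → ℝ :=
  fun i => f (gridTime τ N (i + 1)) - f (gridTime τ N i)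

variable {f : ℝ → ℝ} {τ : ℝ} {N : ℕ}

lemma gridTime_zero : gridTime τ N 0 = 0 := by simp [gridTime]

lemma gridTime_of_le {i : ℕ} (hi : i ≤ N) : gridTime τ N i = i * (τ / N) := by
  rw [gridTime, min_eq_left hi]

lemma gridTime_self (hN : N ≠ 0) : gridTime τ N N = τ := by
  rw [gridTime_of_le le_rfl]
  field_simp

lemma gridTime_succ_sub {i : ℕ} (hi : i < N) : gridTime τ N (i + 1) - gridTime τ N i = τ / N := by
  rw [gridTime_of_le hi, gridTime_of_le hi.le]
  push_cast
  ring

lemma monotone_gridTime (hτ : 0 ≤ τ) : Monotone (gridTime τ N) := fun i j hij => by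
  unfold gridTime
  gcongr

lemma gridTime_mem_Icc (hτ : 0 ≤ τ) (i : ℕ) : gridTime τ N i ∈ Icc 0 τ := by
  rcases eq_or_ne N 0 with rfl | hN
  · simpa [gridTime] using hτ
  · refine ⟨gridTime_zero (τ := τ) (N := N) ▸ monotone_gridTime hτ (Nat.zero_le i), ?_⟩
    calc gridTime τ N i ≤ N * (τ / N) :=
          mul_le_mul_of_nonneg_right (Nat.cast_le.2 (min_le_right i N)) (by positivity)
      _ = τ := by field_simp

lemma partialSum_gridIncrements {k : ℕ} (hk : k ≤ N) :
    partialSum k (gridIncrements f τ N) = f (gridTime τ N k) - f 0 := by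
  induction k with
  | zero => rw [partialSum_zero, gridTime_zero, sub_self]
  | succ k ih =>
    rw [partialSum_succ hk, ih (Nat.le_of_succ_le hk), gridIncrements]
    ring

lemma exists_dist_gridTime_le (hτ : 0 < τ) (hN : N ≠ 0) {t : ℝ} (ht : t ∈ Icc 0 τ) :
    ∃ k ≤ N, dist (gridTime τ N k) t ≤ τ / N := by
  have hh : 0 < τ / N := div_pos hτ (Nat.cast_pos.2 (Nat.pos_of_ne_zero hN))
  have hq : 0 ≤ t / (τ / N) := div_nonneg ht.1 hh.le
  have hk : ⌊t / (τ / N)⌋₊ ≤ N := Nat.floor_le_of_le <| by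
    rw [div_le_iff₀ hh]
    calc t ≤ τ := ht.2
      _ = N * (τ / N) := by field_simp
  refine ⟨_, hk, ?_⟩
  rw [gridTime_of_le hk, Real.dist_eq, abs_sub_comm, abs_of_nonneg]
  · have := Nat.lt_floor_add_one (t / (τ / N))
    rw [div_lt_iff₀ hh] at this
    linarith
  · have := Nat.floor_le hq
    rw [le_div_iff₀ hh] at this
    linarith

lemma eventually_exists_gridTime_mem (hτ : 0 < τ) {t : ℝ} (ht : t ∈ Icc 0 τ) {U : Set ℝ}
    (hU : U ∈ 𝓝 t) : ∀ᶠ N in atTop, ∃ k ≤ N, gridTime τ N k ∈ U := by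
  obtain ⟨δ, hδ, hball⟩ := Metric.mem_nhds_iff.1 hU
  filter_upwards [eventually_ne_atTop 0,
    (tendsto_const_div_atTop_nhds_zero_nat τ).eventually (gt_mem_nhds hδ)] with N hN hNδ
  obtain ⟨k, hk, hdist⟩ := exists_dist_gridTime_le hτ hN ht
  exact ⟨k, hk, hball (hdist.trans_lt hNδ)⟩

lemma eventually_gridIncrements_notMem_hasStepGT (hτ : 0 ≤ τ) (hf : ContinuousOn f (Icc 0 τ))
    {ε : ℝ} (hε : 0 < ε) : ∀ᶠ N in atTop, gridIncrements f τ N ∉ hasStepGT ε := by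
  obtain ⟨δ, hδ, hfδ⟩ := Metric.uniformContinuousOn_iff.1
    (isCompact_Icc.uniformContinuousOn_of_continuous hf) ε hε
  filter_upwards [(tendsto_const_div_atTop_nhds_zero_nat τ).eventually (gt_mem_nhds hδ)]
    with N hNδ
  rintro ⟨i, hi⟩
  refine hi.not_gt (hfδ _ (gridTime_mem_Icc hτ _) _ (gridTime_mem_Icc hτ _) ?_)
  rwa [Real.dist_eq, gridTime_succ_sub i.is_lt, abs_of_nonneg (by positivity)]

lemma exists_eq_of_gridIncrements_mem_hitsLevel (hτ : 0 ≤ τ) (hf : ContinuousOn f (Icc 0 τ))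
    (hf0 : f 0 = 0) {a : ℝ} (ha : 0 < a) (h : gridIncrements f τ N ∈ hitsLevel a) :
    ∃ t ∈ Icc 0 τ, f t = a := by
  obtain ⟨k, hk, hak⟩ := h
  rw [partialSum_gridIncrements hk, hf0, sub_zero] at hak
  have hkτ := gridTime_mem_Icc (N := N) hτ k
  obtain ⟨t, ht, hft⟩ := intermediate_value_Icc hkτ.1 (hf.mono (Icc_subset_Icc le_rfl hkτ.2))
    ⟨by rw [hf0]; exact ha.le, hak⟩
  exact ⟨t, ⟨ht.1, ht.2.trans hkτ.2⟩, hft⟩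

lemma eventually_gridIncrements_mem_hitsLevel (hτ : 0 < τ) {t b : ℝ} (ht : t ∈ Icc 0 τ)
    (hf : ContinuousAt f t) (hb : b < f t - f 0) :
    ∀ᶠ N in atTop, gridIncrements f τ N ∈ hitsLevel b := by
  filter_upwards [eventually_exists_gridTime_mem hτ ht
    ((hf.sub continuousAt_const).eventually (lt_mem_nhds hb))] with N ⟨k, hk, hbk⟩
  exact ⟨k, hk, (partialSum_gridIncrements hk).symm ▸ hbk.le⟩

lemma hittingTime_le_iff (hf : Continuous f) (a τ : ℝ) :
    sInf {t | 0 ≤ t ∧ f t = a} ≤ τ ∧ {t | 0 ≤ t ∧ f t = a}.Nonempty ↔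
      ∃ t ∈ Icc 0 τ, f t = a := by
  have hbdd : BddBelow {t | 0 ≤ t ∧ f t = a} := ⟨0, fun t ht => ht.1⟩
  constructor
  · rintro ⟨hle, hne⟩
    have hmem := ((isClosed_le continuous_const continuous_id).inter
      (isClosed_eq hf continuous_const)).csInf_mem hne hbdd
    exact ⟨_, ⟨hmem.1, hle⟩, hmem.2⟩
  · rintro ⟨t, ht, hft⟩
    exact ⟨(csInf_le hbdd ⟨ht.1, hft⟩).trans ht.2, t, ht.1, hft⟩

end Grid

section MeasureLimits

lemma measure_le_of_ae_imp_eventually_mem {Ω : Type*} [MeasurableSpace Ω] {μ : Measure Ω}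
    {s : Set Ω} {t : ℕ → Set Ω} {c : ℝ≥0∞} (hst : ∀ᵐ ω ∂μ, ω ∈ s → ∀ᶠ n in atTop, ω ∈ t n)
    (ht : ∀ᶠ n in atTop, μ (t n) ≤ c) : μ s ≤ c := by
  obtain ⟨n₀, hn₀⟩ := eventually_atTop.1 ht
  have hmono : Monotone fun n => ⋂ m ≥ n, t m :=
    fun n n' hnn' => iInter₂_mono' fun m hm => ⟨m, hnn'.trans hm, subset_rfl⟩
  calc μ s ≤ μ (⋃ n, ⋂ m ≥ n, t m) :=
        measure_mono_ae <| hst.mono fun ω h hs =>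
          let ⟨n, hn⟩ := eventually_atTop.1 (h hs); mem_iUnion.2 ⟨n, mem_iInter₂.2 hn⟩
    _ = ⨆ n, μ (⋂ m ≥ n, t m) := hmono.measure_iUnion
    _ ≤ c := iSup_le fun n =>
        (measure_mono (iInter₂_subset _ (le_max_left n n₀))).trans (hn₀ _ (le_max_right n n₀))

variable (ν : Measure ℝ)

lemma measure_Ici_le_add_measure_Icc {b δ c d : ℝ} (hc : b - δ ≤ c) (hd : d ≤ b + δ) :
    ν (Ici c) ≤ ν (Ici d) + ν (Icc (b - δ) (b + δ)) := by
  refine (measure_mono fun x (hx : c ≤ x) => ?_).trans (measure_union_le _ _)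
  rcases le_or_gt d x with h | h
  · exact Or.inl h
  · exact Or.inr ⟨hc.trans hx, h.le.trans hd⟩

lemma le_of_forall_le_add_mul_measure_Icc [IsFiniteMeasure ν] [NullSingletonClass ν] (b : ℝ)
    {x y c : ℝ≥0∞} (hc : c ≠ ∞) (h : ∀ δ > 0, x ≤ y + c * ν (Icc (b - δ) (b + δ))) :
    x ≤ y := by
  have hlim : Tendsto (fun δ => y + c * ν (Icc (b - δ) (b + δ))) (𝓝[>] 0) (𝓝 (y + c * 0)) :=
    tendsto_const_nhds.add <| ENNReal.Tendsto.const_mul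
      ((tendsto_measure_Icc ν b).mono_left nhdsWithin_le_nhds) (Or.inr hc)
  rw [mul_zero, add_zero] at hlim
  exact ge_of_tendsto hlim (eventually_nhdsWithin_of_forall h)

end MeasureLimits

section Brownian

variable {Ω : Type*} [MeasurableSpace Ω] {P : Measure Ω} {W : ℝ → Ω → ℝ} {τ : ℝ} {N : ℕ}

lemma measurable_gridIncrements (hW : ∀ t, Measurable (W t)) :
    Measurable fun ω => gridIncrements (W · ω) τ N :=
  measurable_pi_lambda _ fun _ => (hW _).sub (hW _)

lemma map_gridIncrements (hW : IsBrownianMotion P W) (hτ : 0 ≤ τ) :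
    P.map (fun ω => gridIncrements (W · ω) τ N) =
      Measure.pi fun _ => gaussianReal 0 (τ / N).toNNReal := by
  obtain ⟨hWm, -, -, hgauss, hindep⟩ := hW
  refine ((hindep N (gridTime τ N) (monotone_gridTime hτ) gridTime_zero.ge).map_fun_eq_pi_map
    fun i => ((hWm _).sub (hWm _)).aemeasurable).trans ?_
  congr with i : 1
  have hlaw := hgauss _ _ (gridTime_mem_Icc (N := N) hτ i).1
    (monotone_gridTime hτ (Nat.le_succ i))
  rwa [gridTime_succ_sub i.is_lt] at hlaw

lemma measure_preimage_gridIncrements (hW : IsBrownianMotion P W) (hτ : 0 ≤ τ)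
    {s : Set (Fin N → ℝ)} (hs : MeasurableSet s) :
    P ((fun ω => gridIncrements (W · ω) τ N) ⁻¹' s) =
      (Measure.pi fun _ => gaussianReal 0 (τ / N).toNNReal) s := by
  rw [← map_gridIncrements hW hτ, Measure.map_apply (measurable_gridIncrements hW.1) hs]

lemma measure_setOf_le_partialSum (hW : IsBrownianMotion P W) (hτ : 0 ≤ τ) (hN : N ≠ 0)
    (b : ℝ) :
    (Measure.pi fun _ : Fin N => gaussianReal 0 (τ / N).toNNReal) {x | b ≤ partialSum N x} =
      P {ω | b ≤ W τ ω - W 0 ω} := by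
  rw [← measure_preimage_gridIncrements hW hτ (measurableSet_le measurable_const (by fun_prop))]
  congr 1
  ext ω
  simp only [mem_preimage, mem_ofPred_eq, partialSum_gridIncrements le_rfl, gridTime_self hN]

lemma measure_setOf_le_sub (hW : IsBrownianMotion P W) (hτ : 0 ≤ τ) (b : ℝ) :
    P {ω | b ≤ W τ ω - W 0 ω} = gaussianReal 0 τ.toNNReal (Ici b) := by
  have hlaw := hW.2.2.2.1 0 τ le_rfl hτ
  rw [sub_zero] at hlaw
  rw [← hlaw]
  exact (Measure.map_apply ((hW.1 τ).sub (hW.1 0)) measurableSet_Ici).symm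

theorem measure_exists_mem_Icc_eq_le (hW : IsBrownianMotion P W) (hτ : 0 < τ) {a b : ℝ}
    (hb : b < a) :
    P {ω | ∃ t ∈ Icc 0 τ, W t ω = a} ≤ 2 * P {ω | b ≤ W τ ω - W 0 ω} := by
  refine measure_le_of_ae_imp_eventually_mem
    (t := fun N => (fun ω => gridIncrements (W · ω) τ N) ⁻¹' hitsLevel b) ?_ ?_
  · filter_upwards [hW.2.1, hW.2.2.1] with ω h0 hc ⟨t, ht, hta⟩
    exact eventually_gridIncrements_mem_hitsLevel hτ ht hc.continuousAt
      (by rwa [hta, h0, sub_zero])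
  · filter_upwards [eventually_ne_atTop 0] with N hN
    rw [measure_preimage_gridIncrements hW hτ.le (measurableSet_hitsLevel b),
      ← measure_setOf_le_partialSum hW hτ.le hN]
    exact measure_hitsLevel_le_two_mul (fun k => map_reflectFrom_pi k) b

theorem le_measure_exists_mem_Icc_eq [IsFiniteMeasure P] (hW : IsBrownianMotion P W) (hτ : 0 < τ)
    {a ε : ℝ} (ha : 0 < a) (hε : 0 < ε) :
    P {ω | a ≤ W τ ω - W 0 ω} + P {ω | a + 2 * ε ≤ W τ ω - W 0 ω} ≤
      P {ω | ∃ t ∈ Icc 0 τ, W t ω = a} := by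
  set E := {ω | ∃ t ∈ Icc 0 τ, W t ω = a}
  set C : ℕ → Set Ω := fun N => (fun ω => gridIncrements (W · ω) τ N) ⁻¹' hasStepGT ε
  have hC : Tendsto (fun N => P (C N)) atTop (𝓝 0) := by
    simpa using tendsto_measure_of_ae_tendsto_indicator_of_isFiniteMeasure atTop
      MeasurableSet.empty (fun N => measurable_gridIncrements hW.1 (measurableSet_hasStepGT ε)) <|
      by
        filter_upwards [hW.2.2.1] with ω hc
        simpa [C] using eventually_gridIncrements_notMem_hasStepGT hτ.le hc.continuousOn hε
  refine ge_of_tendsto (by simpa using hC.const_add (P E)) ?_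
  filter_upwards [eventually_ne_atTop 0] with N hN
  have hhit : (fun ω => gridIncrements (W · ω) τ N) ⁻¹' hitsLevel a ≤ᵐ[P] E := by
    filter_upwards [hW.2.1, hW.2.2.1] with ω h0 hc h
    exact exists_eq_of_gridIncrements_mem_hitsLevel hτ.le hc.continuousOn h0 ha h
  calc P {ω | a ≤ W τ ω - W 0 ω} + P {ω | a + 2 * ε ≤ W τ ω - W 0 ω}
      ≤ P ((fun ω => gridIncrements (W · ω) τ N) ⁻¹' hitsLevel a) + P (C N) := by
        rw [← measure_setOf_le_partialSum hW hτ.le hN, ← measure_setOf_le_partialSum hW hτ.le hN,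
          measure_preimage_gridIncrements hW hτ.le (measurableSet_hitsLevel a),
          measure_preimage_gridIncrements hW hτ.le (measurableSet_hasStepGT ε)]
        exact le_measure_hitsLevel_add_measure_hasStepGT (fun k => map_reflectFrom_pi k) ha hε.le
    _ ≤ P E + P (C N) := add_le_add_left (measure_mono_ae hhit) _

lemma measure_hittingTime_le (hW : IsBrownianMotion P W) (a τ : ℝ) :
    P {ω | sInf {t : ℝ | 0 ≤ t ∧ W t ω = a} ≤ τ ∧ {t : ℝ | 0 ≤ t ∧ W t ω = a}.Nonempty} =
      P {ω | ∃ t ∈ Icc 0 τ, W t ω = a} :=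
  measure_congr <| by
    filter_upwards [hW.2.2.1] with ω hc
    exact propext (hittingTime_le_iff hc a τ)

lemma measure_setOf_le (hW : IsBrownianMotion P W) (hτ : 0 ≤ τ) (b : ℝ) :
    P {ω | b ≤ W τ ω} = gaussianReal 0 τ.toNNReal (Ici b) := by
  rw [← measure_setOf_le_sub hW hτ]
  refine measure_congr ?_
  filter_upwards [hW.2.1] with ω h0
  change (b ≤ W τ ω) = (b ≤ W τ ω - W 0 ω)
  rw [h0, sub_zero]

theorem measure_exists_mem_Icc_eq [IsFiniteMeasure P] (hW : IsBrownianMotion P W) (hτ : 0 < τ)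
    {a : ℝ} (ha : 0 < a) :
    P {ω | ∃ t ∈ Icc 0 τ, W t ω = a} = 2 * gaussianReal 0 τ.toNNReal (Ici a) := by
  set ν := gaussianReal 0 τ.toNNReal
  have : NullSingletonClass ν := nullSingletonClass_gaussianReal (by simpa using hτ)
  have hlaw := measure_setOf_le_sub hW hτ.le
  refine le_antisymm (le_of_forall_le_add_mul_measure_Icc ν a (c := 2) (by simp) fun δ hδ => ?_)
    (le_of_forall_le_add_mul_measure_Icc ν a (c := 1) (by simp) fun δ hδ => ?_)
  · calc P {ω | ∃ t ∈ Icc 0 τ, W t ω = a} ≤ 2 * ν (Ici (a - δ)) := by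
          rw [← hlaw]
          exact measure_exists_mem_Icc_eq_le hW hτ (by linarith)
      _ ≤ 2 * (ν (Ici a) + ν (Icc (a - δ) (a + δ))) := by
          gcongr
          exact measure_Ici_le_add_measure_Icc ν le_rfl (by linarith)
      _ = 2 * ν (Ici a) + 2 * ν (Icc (a - δ) (a + δ)) := mul_add _ _ _
  · calc 2 * ν (Ici a) ≤ ν (Ici a) + (ν (Ici (a + 2 * (δ / 2))) + ν (Icc (a - δ) (a + δ))) := by
          rw [two_mul]
          gcongr
          exact measure_Ici_le_add_measure_Icc ν (by linarith) (by linarith)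
      _ ≤ P {ω | ∃ t ∈ Icc 0 τ, W t ω = a} + 1 * ν (Icc (a - δ) (a + δ)) := by
          rw [one_mul, ← add_assoc, ← hlaw, ← hlaw]
          gcongr
          exact le_measure_exists_mem_Icc_eq hW hτ ha (half_pos hδ)

end Brownian

end ReflectionPrinciple

open ReflectionPrinciple

/-- Reflection principle: for a standard Brownian motion `W` and `a > 0`, the first
hitting time `T_a = inf{t ≥ 0 : W(t) = a}` satisfies `P(T_a ≤ τ) = 2 P(W(τ) ≥ a)`
for every `τ > 0`. -/
theorem stmt1 {Ω : Type*} [MeasurableSpace Ω] (P : Measure Ω) [IsProbabilityMeasure P]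
    (W : ℝ → Ω → ℝ) (hW : IsBrownianMotion P W) (a : ℝ) (ha : 0 < a) :
    ∀ τ : ℝ, 0 < τ →
      P {ω | sInf {t : ℝ | 0 ≤ t ∧ W t ω = a} ≤ τ ∧ {t : ℝ | 0 ≤ t ∧ W t ω = a}.Nonempty} =
        2 * P {ω | a ≤ W τ ω} := by
  intro τ hτ
  rw [measure_hittingTime_le hW, measure_setOf_le hW hτ.le]
  exact measure_exists_mem_Icc_eq hW hτ ha
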